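/- Let w = [x₁·[x₂,x₃,x₄], x₅] in ℤ⟨X⟩. Then w ∈ γ₃, 6w ∈ γ₄, but w ∉ γ₄, where γₙ denotes the n-th term of the lower central series of ℤ⟨X⟩ regarded as a Lie ring under the commutator bracket. -/

import Mathlib

/-!
Write `w = [a·[[b,c],d], e]`. Since `a[u,d] = [au,d] - [a,d]u`, and `[gh,e] = [g,he] + [h,eg]`
lies in `γ₃` for `g, h ∈ γ₂`, the element `[a[u,d], e]` lies in `γ₃` as soon as `u ∈ γ₂`.

Modulo `γ₄`, the class of `[s[[p,q],r], t]` is antisymmetric in `p, q`, alternating in `r, s, t`,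
and satisfies the Jacobi identity in `p, q, r`. Up to sign it therefore only depends on the pair
`{p, q}` among five letters, Jacobi says that these ten values sum to zero around every triangle
of `K₅`, and this forces six times each of them to vanish: `6w ∈ γ₄`.

Finally `γ₄` is spanned by the left-normed brackets `[[[u,v],w],t]` of monomials. A `ℤ/3`-valued
functional supported on 22 multilinear monomials of degree 5 (found by computer) kills each of them
but takes the value `1` on `w`, so `w ∉ γ₄`.
-/

noncomputable section

/-- `ℤ⟨X⟩`, the free unital associative ring on `X = {x₁, x₂, …}`. -/
abbrev R : Type := FreeAlgebra ℤ ℕ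

/-- The commutator `[a,b] = ab - ba`. -/
def br (a b : R) : R := a * b - b * a

/-- The free generators. -/
def x (i : ℕ) : R := FreeAlgebra.ι ℤ i

/-- The lower central series of `ℤ⟨X⟩` as a Lie ring: `gamma 0 = γ₁ = ℤ⟨X⟩`,
`gamma n = γ_{n+1} = [γₙ, ℤ⟨X⟩]` (the additive subgroup generated by `[g,a]`, `g ∈ γₙ`). -/
def gamma : ℕ → AddSubgroup R
  | 0 => ⊤
  | n + 1 => AddSubgroup.closure {y | ∃ g ∈ gamma n, ∃ a : R, y = br g a}

theorem br_mem_gamma_succ {n : ℕ} {g : R} (hg : g ∈ gamma n) (a : R) : br g a ∈ gamma (n + 1) :=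
  AddSubgroup.subset_closure ⟨g, hg, a, rfl⟩

theorem br_mem_gamma_one (a b : R) : br a b ∈ gamma 1 :=
  br_mem_gamma_succ (AddSubgroup.mem_top a) b

theorem gamma_succ_le : ∀ n, gamma (n + 1) ≤ gamma n
  | 0 => le_top
  | n + 1 => (AddSubgroup.closure_le _).2 fun _ ⟨_, hg, a, hy⟩ =>
      hy ▸ br_mem_gamma_succ (gamma_succ_le n hg) a

theorem br_mul_mem_gamma_two {g h : R} (hg : g ∈ gamma 1) (hh : h ∈ gamma 1) (e : R) :
    br (g * h) e ∈ gamma 2 := by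
  have key : br (g * h) e = br g (h * e) + br h (e * g) := by simp only [br]; noncomm_ring
  rw [key]
  exact add_mem (br_mem_gamma_succ hg _) (br_mem_gamma_succ hh _)

theorem br_mul_br_mem_gamma_two (a : R) {u : R} (hu : u ∈ gamma 1) (d e : R) :
    br (a * br u d) e ∈ gamma 2 := by
  have key : br (a * br u d) e = br (br (a * u) d) e - br (br a d * u) e := by
    simp only [br]; noncomm_ring
  rw [key]
  exact sub_mem (br_mem_gamma_succ (br_mem_gamma_one _ _) e)
    (br_mul_mem_gamma_two (br_mem_gamma_one a d) hu e)

theorem six_smul_eq_zero_of_jacobi {α M : Type*} [AddCommGroup M] (φ : α → α → α → α → α → M)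
    (swap₁₂ : ∀ p q r s t, φ q p r s t = -φ p q r s t)
    (swap₃₄ : ∀ p q r s t, φ p q s r t = -φ p q r s t)
    (swap₄₅ : ∀ p q r s t, φ p q r t s = -φ p q r s t)
    (jacobi : ∀ p q r s t, φ p q r s t + φ q r p s t + φ r p q s t = 0) (a b c d e : α) :
    (6 : ℤ) • φ a b c d e = 0 := by
  have rot : ∀ p q r s t, φ p q s t r = φ p q r s t := fun p q r s t => by
    rw [swap₄₅, swap₃₄, swap₄₅, neg_neg]
  have flip : ∀ p q r s t, φ q p s r t = φ p q r s t := fun p q r s t => by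
    rw [swap₁₂, swap₃₄, neg_neg]
  -- All terms are even rearrangements of `a b c d e`; `rot` and `flip` bring each one to a
  -- representative that only depends on its first two letters, so the Jacobi identities become
  -- relations `F xy + F yz + F zx = 0` on the triangles of `K₅`.
  have abc := jacobi a b c d e
  have abd : φ a b c d e + φ b d a e c + φ d a b e c = 0 := by
    rw [← rot a b c d e]; exact jacobi a b d e c
  have abe : φ a b c d e + φ b e a c d + φ e a b c d = 0 := by
    rw [← rot a b c d e, ← rot a b d e c]; exact jacobi a b e c d
  have acd : φ c a b d e + φ c d a b e + φ d a b e c = 0 := by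
    rw [← flip c a b d e, ← rot d a b e c, ← rot d a e c b]; exact jacobi a c d b e
  have ace : φ c a b d e + φ c e a d b + φ e a b c d = 0 := by
    rw [← rot c a b d e, ← flip c a d e b, ← rot e a b c d]; exact jacobi a c e d b
  have ade : φ d a b e c + φ d e a b c + φ e a b c d = 0 := by
    rw [← flip d a b e c, ← rot e a b c d, ← rot e a c d b]; exact jacobi a d e b c
  have bcd : φ b c a d e + φ c d a b e + φ b d a e c = 0 := by
    rw [← rot b c a d e, ← rot c d a b e, ← rot b d a e c, ← flip b d e c a]
    exact jacobi b c d e a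
  have bce : φ b c a d e + φ c e a d b + φ b e a c d = 0 := by
    rw [← rot b c a d e, ← rot b c d e a, ← rot c e a d b, ← rot c e d b a, ← flip b e a c d]
    exact jacobi b c e a d
  have bde : φ b d a e c + φ d e a b c + φ b e a c d = 0 := by
    rw [← rot b d a e c, ← rot d e a b c, ← rot b e a c d, ← flip b e c d a]
    exact jacobi b d e c a
  have cde : φ c d a b e + φ d e a b c + φ c e a d b = 0 := by
    rw [← rot c d a b e, ← rot c d b e a, ← rot d e a b c, ← rot d e b c a, ← flip c e a d b]
    exact jacobi c d e a b
  linear_combination (norm := module) (2 : ℤ) • (abc + abd + abe) - (acd + ace + ade)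
    - (bcd + bce + bde) + (2 : ℤ) • cde

def wClass (p q r s t : R) : R ⧸ gamma 3 := br (s * br (br p q) r) t

theorem wClass_swap₁₂ (p q r s t : R) : wClass q p r s t = -wClass p q r s t := by
  rw [wClass, wClass, ← QuotientAddGroup.mk_neg]
  congr 1
  simp only [br]; noncomm_ring

theorem wClass_jacobi (p q r s t : R) :
    wClass p q r s t + wClass q r p s t + wClass r p q s t = 0 := by
  have jacobi : br (s * br (br p q) r) t + br (s * br (br q r) p) t + br (s * br (br r p) q) t
      = 0 := by
    simp only [br]; noncomm_ring
  simp only [wClass, ← QuotientAddGroup.mk_add, jacobi, QuotientAddGroup.mk_zero]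

theorem wClass_swap₃₄ (p q r s t : R) : wClass p q s r t = -wClass p q r s t := by
  refine eq_neg_of_add_eq_zero_left ?_
  rw [wClass, wClass, ← QuotientAddGroup.mk_add, QuotientAddGroup.eq_zero_iff]
  have hu : br p q ∈ gamma 1 := br_mem_gamma_one p q
  have key : br (r * br (br p q) s) t + br (s * br (br p q) r) t
      = br (br (br p q) (r * s)) t - br (br (br (br p q) r) s) t := by
    simp only [br]; noncomm_ring
  rw [key]
  exact sub_mem (br_mem_gamma_succ (br_mem_gamma_succ hu _) t)
    (gamma_succ_le 3 (br_mem_gamma_succ (br_mem_gamma_succ (br_mem_gamma_succ hu r) s) t))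

theorem wClass_swap₄₅ (p q r s t : R) : wClass p q r t s = -wClass p q r s t := by
  refine eq_neg_of_add_eq_zero_left ?_
  rw [wClass, wClass, ← QuotientAddGroup.mk_add, QuotientAddGroup.eq_zero_iff]
  have hg : br (br p q) r ∈ gamma 2 := br_mem_gamma_succ (br_mem_gamma_one p q) r
  have key : br (t * br (br p q) r) s + br (s * br (br p q) r) t
      = br (br (br p q) r) (s * t) - br (br (br (br p q) r) s) t := by
    simp only [br]; noncomm_ring
  rw [key]
  exact sub_mem (br_mem_gamma_succ hg _)
    (gamma_succ_le 3 (br_mem_gamma_succ (br_mem_gamma_succ hg s) t))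

theorem six_smul_br_mul_br_mem_gamma_three (a b c d e : R) :
    (6 : ℤ) • br (a * br (br b c) d) e ∈ gamma 3 := by
  rw [← QuotientAddGroup.eq_zero_iff, QuotientAddGroup.mk_zsmul]
  exact six_smul_eq_zero_of_jacobi wClass wClass_swap₁₂ wClass_swap₃₄ wClass_swap₄₅
    wClass_jacobi b c d a e

def word : FreeMonoid ℕ →* R := FreeMonoid.lift (FreeAlgebra.ι ℤ)

theorem basisFreeMonoid_eq_word : ⇑(FreeAlgebra.basisFreeMonoid ℤ ℕ) = word := by
  ext m
  simp [FreeAlgebra.basisFreeMonoid, FreeAlgebra.equivMonoidAlgebraFreeMonoid, word]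
  exact one_smul ℤ _

theorem span_range_word : Submodule.span ℤ (Set.range word) = ⊤ := by
  rw [← basisFreeMonoid_eq_word]
  exact (FreeAlgebra.basisFreeMonoid ℤ ℕ).span_eq

def brₗ : R →ₗ[ℤ] R →ₗ[ℤ] R := LinearMap.mul ℤ R - (LinearMap.mul ℤ R).flip

theorem brₗ_apply (a b : R) : brₗ a b = br a b := rfl

def wordBrackets : ℕ → Set R
  | 0 => Set.range word
  | n + 1 => Set.image2 br (wordBrackets n) (Set.range word)

theorem gamma_toIntSubmodule_eq_span : ∀ n,
    (gamma n).toIntSubmodule = Submodule.span ℤ (wordBrackets n)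
  | 0 => by simp [gamma, wordBrackets, span_range_word]
  | n + 1 => by
    have hgen : {y | ∃ g ∈ gamma n, ∃ a : R, y = br g a}
        = Set.image2 (fun g a => brₗ g a) ((gamma n).toIntSubmodule : Set R)
            (⊤ : Submodule ℤ R) := by
      ext y; simp [brₗ_apply, eq_comm]
    rw [gamma, AddSubgroup.toIntSubmodule_closure, hgen, ← Submodule.map₂_eq_span_image2,
      gamma_toIntSubmodule_eq_span n, ← span_range_word, Submodule.map₂_span_span]
    rfl

-- The support of `ψ` below, found by linear algebra over `ℤ/3`.
def plusWords : List (List ℕ) :=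
  [[1, 4, 5, 2, 3], [2, 1, 3, 5, 4], [2, 1, 4, 3, 5], [2, 4, 3, 5, 1], [3, 2, 4, 5, 1],
   [3, 5, 1, 2, 4], [4, 5, 1, 2, 3], [4, 5, 1, 3, 2], [5, 2, 4, 3, 1], [5, 4, 3, 1, 2]]

def minusWords : List (List ℕ) :=
  [[1, 2, 3, 5, 4], [1, 2, 4, 3, 5], [1, 4, 3, 5, 2], [2, 3, 5, 1, 4], [3, 1, 2, 4, 5],
   [3, 1, 4, 5, 2], [3, 2, 5, 1, 4], [3, 5, 2, 4, 1], [4, 1, 2, 5, 3], [5, 1, 4, 3, 2],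
   [5, 3, 2, 1, 4], [5, 4, 3, 2, 1]]

def coeff (l : List ℕ) : ZMod 3 :=
  (if l ∈ plusWords then 1 else 0) - (if l ∈ minusWords then 1 else 0)

theorem perm_of_coeff_ne_zero {l : List ℕ} (h : coeff l ≠ 0) : l.Perm [1, 2, 3, 4, 5] := by
  have hsupp : ∀ l ∈ plusWords ++ minusWords, l.Perm [1, 2, 3, 4, 5] := by decide
  apply hsupp
  by_contra hl
  simp only [List.mem_append, not_or] at hl
  simp [coeff, hl.1, hl.2] at h

def bracketCoeff (u v w t : List ℕ) : ZMod 3 :=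
  coeff (u ++ v ++ w ++ t) - coeff (v ++ u ++ w ++ t) - coeff (w ++ u ++ v ++ t)
    + coeff (w ++ v ++ u ++ t) - coeff (t ++ u ++ v ++ w) + coeff (t ++ v ++ u ++ w)
    + coeff (t ++ w ++ u ++ v) - coeff (t ++ w ++ v ++ u)

theorem bracketCoeff_split_eq_zero : ∀ L ∈ [1, 2, 3, 4, 5].permutations',
    ∀ n ∈ [(1, 1, 1), (1, 1, 2), (1, 2, 1), (2, 1, 1)],
      bracketCoeff (L.take n.1) ((L.drop n.1).take n.2.1) (((L.drop n.1).drop n.2.1).take n.2.2)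
        (((L.drop n.1).drop n.2.1).drop n.2.2) = 0 := by
  decide +kernel

theorem bracketCoeff_eq_zero (u v w t : List ℕ) : bracketCoeff u v w t = 0 := by
  by_cases hempty : u = [] ∨ v = [] ∨ w = [] ∨ t = []
  · rcases hempty with rfl | rfl | rfl | rfl <;>
      simp only [bracketCoeff, List.nil_append, List.append_nil] <;> ring
  obtain ⟨hu, hv, hw, ht⟩ : u ≠ [] ∧ v ≠ [] ∧ w ≠ [] ∧ t ≠ [] := by
    simpa only [not_or] using hempty
  by_cases hL : (u ++ v ++ w ++ t).Perm [1, 2, 3, 4, 5]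
  · have hlen := hL.length_eq
    simp only [List.length_append, List.length_cons, List.length_nil] at hlen
    have hn : (u.length, v.length, w.length) ∈ [(1, 1, 1), (1, 1, 2), (1, 2, 1), (2, 1, 1)] := by
      have := List.length_pos_iff.2 hu; have := List.length_pos_iff.2 hv
      have := List.length_pos_iff.2 hw; have := List.length_pos_iff.2 ht
      simp only [List.mem_cons, Prod.mk.injEq, List.not_mem_nil, or_false]
      omega
    simpa using bracketCoeff_split_eq_zero _ (List.mem_permutations'.2 hL) _ hn
  · have h0 : ∀ l, l.Perm (u ++ v ++ w ++ t) → coeff l = 0 := fun l hl =>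
      by_contra fun h => hL (hl.symm.trans (perm_of_coeff_ne_zero h))
    rw [bracketCoeff, h0 _ .rfl, h0 (v ++ u ++ w ++ t), h0 (w ++ u ++ v ++ t),
      h0 (w ++ v ++ u ++ t), h0 (t ++ u ++ v ++ w), h0 (t ++ v ++ u ++ w), h0 (t ++ w ++ u ++ v),
      h0 (t ++ w ++ v ++ u)]
    · ring
    all_goals exact List.perm_iff_count.2 fun a => by simp only [List.count_append]; omega

def ψ : R →ₗ[ℤ] ZMod 3 := (FreeAlgebra.basisFreeMonoid ℤ ℕ).constr ℤ fun m => coeff m.toList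

theorem ψ_word (m : FreeMonoid ℕ) : ψ (word m) = coeff m.toList := by
  rw [← basisFreeMonoid_eq_word]
  exact Module.Basis.constr_basis _ _ _ _

theorem ψ_br_br_br_word (u v w t : FreeMonoid ℕ) :
    ψ (br (br (br (word u) (word v)) (word w)) (word t))
      = bracketCoeff u.toList v.toList w.toList t.toList := by
  have expand : br (br (br (word u) (word v)) (word w)) (word t)
      = word (u * v * w * t) - word (v * u * w * t) - word (w * u * v * t)
        + word (w * v * u * t) - word (t * u * v * w) + word (t * v * u * w)
        + word (t * w * u * v) - word (t * w * v * u) := by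
    simp only [br, map_mul]; noncomm_ring
  simp only [expand, map_sub, map_add, ψ_word, FreeMonoid.toList_mul, bracketCoeff]

theorem ψ_eq_zero_of_mem_gamma_three {g : R} (hg : g ∈ gamma 3) : ψ g = 0 := by
  have hle : Submodule.span ℤ (wordBrackets 3) ≤ LinearMap.ker ψ := by
    rw [Submodule.span_le]
    rintro _ ⟨_, ⟨_, ⟨_, ⟨u, rfl⟩, _, ⟨v, rfl⟩, rfl⟩, _, ⟨w, rfl⟩, rfl⟩, _, ⟨t, rfl⟩, rfl⟩
    exact (ψ_br_br_br_word u v w t).trans (bracketCoeff_eq_zero _ _ _ _)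
  exact hle <| by rw [← gamma_toIntSubmodule_eq_span]; exact hg

theorem ψ_br_mul_br_x : ψ (br (x 1 * br (br (x 2) (x 3)) (x 4)) (x 5)) = 1 := by
  have hx : ∀ i, x i = word (FreeMonoid.of i) := fun i => by simp [word, x]
  have expand : ∀ p q r s t : FreeMonoid ℕ,
      br (word s * br (br (word p) (word q)) (word r)) (word t)
        = word (s * p * q * r * t) - word (s * q * p * r * t) - word (s * r * p * q * t)
        + word (s * r * q * p * t) - word (t * s * p * q * r) + word (t * s * q * p * r)
        + word (t * s * r * p * q) - word (t * s * r * q * p) := fun p q r s t => by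
    simp only [br, map_mul]; noncomm_ring
  simp only [hx, expand, map_sub, map_add, ψ_word, FreeMonoid.toList_mul, FreeMonoid.toList_of]
  decide

theorem stmt7 :
    br (x 1 * br (br (x 2) (x 3)) (x 4)) (x 5) ∈ gamma 2 ∧
    (6 : ℤ) • br (x 1 * br (br (x 2) (x 3)) (x 4)) (x 5) ∈ gamma 3 ∧
    br (x 1 * br (br (x 2) (x 3)) (x 4)) (x 5) ∉ gamma 3 := by
  refine ⟨br_mul_br_mem_gamma_two _ (br_mem_gamma_one _ _) _ _,
    six_smul_br_mul_br_mem_gamma_three _ _ _ _ _, fun hw => ?_⟩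
  have := ψ_eq_zero_of_mem_gamma_three hw
  rw [ψ_br_mul_br_x] at this
  exact one_ne_zero this

end
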